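/- For every ξ ∈ ℝ³ ∖ {0} the matrices P⁰(ξ), P⁺(ξ), P⁻(ξ) are the spectral projections of curl_prin(ξ): (i) each of P⁰(ξ), P⁺(ξ), P⁻(ξ) is idempotent; (ii) the product of any two distinct ones is the zero matrix; (iii) P⁰(ξ) + P⁺(ξ) + P⁻(ξ) = I; (iv) each is self-adjoint with respect to the inner product ⟨u,v⟩ := Σ_{α,β} G^{αβ} conj(u_α) v_β on ℂ³ (equivalently G^{-1}·conj(P)ᵀ·G = P); (v) curl_prin(ξ)·P⁰(ξ) = 0, curl_prin(ξ)·P⁺(ξ) = ‖ξ‖·P⁺(ξ), curl_prin(ξ)·P⁻(ξ) = −‖ξ‖·P⁻(ξ); consequently curl_prin(ξ) = ‖ξ‖(P⁺(ξ) − P⁻(ξ)). -/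

import Mathlib

open Matrix

noncomputable section

/-- The totally antisymmetric symbol on three indices, with `ε_{123} = 1`. -/
def epsSym (i j k : Fin 3) : ℝ :=
  if (i, j, k) = (0, 1, 2) ∨ (i, j, k) = (1, 2, 0) ∨ (i, j, k) = (2, 0, 1) then 1
  else if (i, j, k) = (2, 1, 0) ∨ (i, j, k) = (1, 0, 2) ∨ (i, j, k) = (0, 2, 1) then -1
  else 0

/-- `‖ξ‖ := (Σ_{μ,ν} G^{μν} ξ_μ ξ_ν)^{1/2}`, the Riemannian norm of a covector. -/
def xiNorm (G : Matrix (Fin 3) (Fin 3) ℝ) (ξ : Fin 3 → ℝ) : ℝ :=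
  Real.sqrt (∑ μ, ∑ ν, G μ ν * ξ μ * ξ ν)

/-- The principal symbol of `curl = *d` acting on 1-forms. -/
def curlPrin (G : Matrix (Fin 3) (Fin 3) ℝ) (ξ : Fin 3 → ℝ) : Matrix (Fin 3) (Fin 3) ℂ :=
  Matrix.of fun α β =>
    -Complex.I *
      (((Real.sqrt G.det)⁻¹ * ∑ μ, ∑ ν, ∑ γ, epsSym α μ ν * G μ β * G ν γ * ξ γ : ℝ) : ℂ)

/-- `[P⁰(ξ)]_α{}^β := ‖ξ‖⁻² ξ_α Σ_γ G^{βγ} ξ_γ`  (formula (1.5) of the paper). -/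
def projZero (G : Matrix (Fin 3) (Fin 3) ℝ) (ξ : Fin 3 → ℝ) : Matrix (Fin 3) (Fin 3) ℂ :=
  Matrix.of fun α β => ((((xiNorm G ξ) ^ 2)⁻¹ * ξ α * ∑ γ, G β γ * ξ γ : ℝ) : ℂ)

/-- `[P^±(ξ)]_α{}^β := (1/2)[δ_α{}^β − [P⁰(ξ)]_α{}^β ± i‖ξ‖⁻¹ρ Σ ε_{αμν}G^{μγ}G^{νβ}ξ_γ]`
(formula (1.6) of the paper); `σ = 1` gives `P⁺` and `σ = −1` gives `P⁻`. -/
def projPM (σ : ℝ) (G : Matrix (Fin 3) (Fin 3) ℝ) (ξ : Fin 3 → ℝ) :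
    Matrix (Fin 3) (Fin 3) ℂ :=
  Matrix.of fun α β =>
    (1 / 2) * ((if α = β then 1 else 0) - projZero G ξ α β
      + (σ : ℂ) * Complex.I *
          ((((xiNorm G ξ))⁻¹ * (Real.sqrt G.det)⁻¹ *
            ∑ μ, ∑ ν, ∑ γ, epsSym α μ ν * G μ γ * G ν β * ξ γ : ℝ) : ℂ))


/-!
Write `w = Gξ` and let `C` be the real matrix of `v ↦ (Gv) × w`, so that `K := curl_prin(ξ) = -iρC`.
Since `Cξ = w × w = 0` and `w · (Gv × w) = 0`, `C` annihilates `P⁰` on both sides; the cofactor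
identity `(Ax) × (Ay) = (adj A)ᵀ (x × y)` and the vector triple product give
`C² = -det G ‖ξ‖² (1 - P⁰)`, i.e. `K² = ‖ξ‖² (1 - P⁰)`. As `P^± = ½ (1 - P⁰ ± ‖ξ‖⁻¹ K)`, the
algebraic identities follow in any algebra from these three relations alone. Self-adjointness for
the inner product of `G` means that `G P` is Hermitian, which holds for `P⁰` because
`G P⁰ = ‖ξ‖⁻² w wᵀ`, and for `K` because `G C` is antisymmetric.
-/

theorem Matrix.mulVec_cross_mulVec {R : Type*} [CommRing R] (A : Matrix (Fin 3) (Fin 3) R)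
    (u v : Fin 3 → R) : (A *ᵥ u) ⨯₃ (A *ᵥ v) = (adjugate A)ᵀ *ᵥ (u ⨯₃ v) := by
  ext i
  fin_cases i <;>
  · simp only [cross_apply, mulVec, dotProduct, Fin.sum_univ_three, adjugate_fin_three,
      transpose_apply, of_apply, cons_val', cons_val_fin_one, cons_val_zero, cons_val_one, cons_val,
      Fin.isValue, Fin.zero_eta, Fin.mk_one, Fin.reduceFinMk, Nat.succ_eq_add_one, Nat.reduceAdd]
    ring

theorem Matrix.IsHermitian.isSymm {n α : Type*} [Star α] [TrivialStar α] {M : Matrix n n α}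
    (h : M.IsHermitian) : M.IsSymm := by
  rwa [IsHermitian, conjTranspose_eq_transpose_of_trivial] at h

theorem Matrix.inv_mul_conjTranspose_mul_of_isSelfAdjoint {n α : Type*} [Fintype n]
    [DecidableEq n] [CommRing α] [StarRing α] {G P : Matrix n n α} (hG : IsSelfAdjoint G)
    (hdet : IsUnit G.det) (hGP : IsSelfAdjoint (G * P)) : G⁻¹ * Pᴴ * G = P := by
  have h : Pᴴ * G = G * P := by
    simpa only [star_eq_conjTranspose, conjTranspose_mul, hG.isHermitian.eq] using hGP.star_eq
  rw [mul_assoc, h, ← mul_assoc, nonsing_inv_mul _ hdet, one_mul]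

section OfReal

variable {l m n : Type*}

theorem Matrix.map_ofReal_mul [Fintype m] (M : Matrix l m ℝ) (N : Matrix m n ℝ) :
    (M * N).map Complex.ofReal = M.map Complex.ofReal * N.map Complex.ofReal :=
  Matrix.map_mul (f := Complex.ofRealHom)

theorem Matrix.conjTranspose_map_ofReal (M : Matrix m n ℝ) :
    (M.map Complex.ofReal)ᴴ = Mᵀ.map Complex.ofReal := by
  ext
  simp

theorem Matrix.IsSymm.isSelfAdjoint_map_ofReal {M : Matrix n n ℝ} (h : M.IsSymm) :
    IsSelfAdjoint (M.map Complex.ofReal) := by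
  rw [IsSelfAdjoint, star_eq_conjTranspose, conjTranspose_map_ofReal, h.eq]

theorem Matrix.isSelfAdjoint_smul_map_ofReal {M : Matrix n n ℝ} (h : Mᵀ = -M) {c : ℂ}
    (hc : star c = -c) : IsSelfAdjoint (c • M.map Complex.ofReal) := by
  rw [IsSelfAdjoint, star_smul, hc, star_eq_conjTranspose, conjTranspose_map_ofReal, h,
    Matrix.map_neg _ Complex.ofReal_neg, neg_smul_neg]

theorem Matrix.isUnit_det_map_ofReal [Fintype n] [DecidableEq n] {M : Matrix n n ℝ}
    (h : IsUnit M.det) : IsUnit (M.map Complex.ofReal).det :=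
  RingHom.map_det Complex.ofRealHom M ▸ h.map Complex.ofRealHom

end OfReal

section SpectralProj

variable {𝕜 A : Type*} [Field 𝕜] [Ring A] [Algebra 𝕜 A]

/-- The projection onto the `s`-eigenspace of `K` when `P² = P`, `KP = PK = 0` and
`K² = s² (1 - P)`. -/
def spectralProj (s : 𝕜) (P K : A) : A := (2⁻¹ : 𝕜) • (1 - P + s⁻¹ • K)

variable {s : 𝕜} {P K : A}

theorem mul_spectralProj_eq_zero (hP : IsIdempotentElem P) (hPK : P * K = 0) :
    P * spectralProj s P K = 0 := by
  simp [spectralProj, mul_add, mul_sub, hP.eq, hPK]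

theorem spectralProj_mul_eq_zero (hP : IsIdempotentElem P) (hKP : K * P = 0) :
    spectralProj s P K * P = 0 := by
  simp [spectralProj, add_mul, sub_mul, hP.eq, hKP]

theorem mul_spectralProj_eq_smul (hKP : K * P = 0) (hK : K * K = s ^ 2 • (1 - P)) (hs : s ≠ 0) :
    K * spectralProj s P K = s • spectralProj s P K := by
  simp only [spectralProj, mul_smul_comm, mul_add, mul_sub, mul_one, hKP, hK, smul_smul]
  match_scalars <;> field_simp

theorem spectralProj_mul_spectralProj (hP : IsIdempotentElem P) (hKP : K * P = 0)
    (hPK : P * K = 0) (hK : K * K = s ^ 2 • (1 - P)) (a b : 𝕜) :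
    spectralProj a P K * spectralProj b P K
      = (4⁻¹ : 𝕜) • ((1 + s ^ 2 / (a * b)) • (1 - P) + (a⁻¹ + b⁻¹) • K) := by
  simp only [spectralProj, add_mul, mul_add, sub_mul, mul_sub, smul_mul_assoc, mul_smul_comm,
    one_mul, mul_one, hP.eq, hKP, hPK, hK, smul_zero, sub_zero, smul_smul]
  match_scalars <;> ring_nf <;> norm_num <;> ring

theorem spectralProj_mul_spectralProj_neg (hP : IsIdempotentElem P) (hKP : K * P = 0)
    (hPK : P * K = 0) (hK : K * K = s ^ 2 • (1 - P)) (hs : s ≠ 0) :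
    spectralProj s P K * spectralProj (-s) P K = 0 := by
  rw [spectralProj_mul_spectralProj hP hKP hPK hK]
  field_simp
  simp

theorem IsSelfAdjoint.mul_spectralProj [StarRing 𝕜] [StarRing A] [StarModule 𝕜 A] {g : A}
    (hg : IsSelfAdjoint g) (hs : IsSelfAdjoint s) (hgP : IsSelfAdjoint (g * P))
    (hgK : IsSelfAdjoint (g * K)) : IsSelfAdjoint (g * spectralProj s P K) := by
  rw [spectralProj, mul_smul_comm, mul_add, mul_sub, mul_one, mul_smul_comm]
  exact (IsSelfAdjoint.ofNat 2).inv₀.smul ((hg.sub hgP).add (hs.inv₀.smul hgK))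

variable [NeZero (2 : 𝕜)]

theorem isIdempotentElem_spectralProj (hP : IsIdempotentElem P) (hKP : K * P = 0)
    (hPK : P * K = 0) (hK : K * K = s ^ 2 • (1 - P)) (hs : s ≠ 0) :
    IsIdempotentElem (spectralProj s P K) := by
  have h4 : (4 : 𝕜) ≠ 0 := by
    rw [show (4 : 𝕜) = 2 ^ 2 by norm_num]
    exact pow_ne_zero 2 two_ne_zero
  rw [IsIdempotentElem, spectralProj_mul_spectralProj hP hKP hPK hK, spectralProj]
  match_scalars <;> field_simp <;> ring

theorem add_spectralProj_add_spectralProj_neg (s : 𝕜) (P K : A) :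
    P + spectralProj s P K + spectralProj (-s) P K = 1 := by
  simp only [spectralProj, inv_neg, neg_smul]
  match_scalars <;> field_simp <;> ring

theorem smul_spectralProj_sub_spectralProj_neg (hs : s ≠ 0) (P K : A) :
    s • (spectralProj s P K - spectralProj (-s) P K) = K := by
  simp only [spectralProj, inv_neg, neg_smul]
  match_scalars <;> field_simp <;> ring

end SpectralProj

theorem sum_epsSym_mul_mul (a b : Fin 3 → ℝ) (α : Fin 3) :
    ∑ μ, ∑ ν, epsSym α μ ν * (a μ * b ν) = (a ⨯₃ b) α := by
  fin_cases α <;>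
  · simp only [epsSym, cross_apply, Fin.sum_univ_three, Prod.mk.injEq, Fin.isValue, Fin.zero_eta,
      Fin.mk_one, Fin.reduceFinMk, Fin.reduceEq, zero_ne_one, one_ne_zero, true_and, false_and,
      and_true, and_false, or_self, or_false, false_or, ↓reduceIte, ite_mul, one_mul, neg_mul,
      zero_mul, zero_add, add_zero, cons_val_zero, cons_val_one, cons_val, Nat.succ_eq_add_one,
      Nat.reduceAdd]
    ring

section Symbol

variable (G : Matrix (Fin 3) (Fin 3) ℝ) (ξ : Fin 3 → ℝ)

def curlCore : Matrix (Fin 3) (Fin 3) ℝ := of fun α β ↦ ((fun μ ↦ G μ β) ⨯₃ (G *ᵥ ξ)) α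

def projZeroReal : Matrix (Fin 3) (Fin 3) ℝ := (xiNorm G ξ ^ 2)⁻¹ • vecMulVec ξ (G *ᵥ ξ)

theorem xiNorm_eq_sqrt_dotProduct : xiNorm G ξ = √(ξ ⬝ᵥ G *ᵥ ξ) := by
  rw [xiNorm]
  congr 1
  simp only [dotProduct, mulVec, Finset.mul_sum]
  exact Finset.sum_congr rfl fun μ _ ↦ Finset.sum_congr rfl fun ν _ ↦ by ring

variable {G} in
theorem xiNorm_sq (hG : G.PosSemidef) : xiNorm G ξ ^ 2 = ξ ⬝ᵥ G *ᵥ ξ := by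
  rw [xiNorm_eq_sqrt_dotProduct, Real.sq_sqrt (by simpa using hG.dotProduct_mulVec_nonneg ξ)]

variable {G} in
theorem xiNorm_pos (hG : G.PosDef) (hξ : ξ ≠ 0) : 0 < xiNorm G ξ := by
  rw [xiNorm_eq_sqrt_dotProduct]
  exact Real.sqrt_pos.2 (by simpa using hG.dotProduct_mulVec_pos hξ)

theorem curlCore_mulVec (v : Fin 3 → ℝ) : curlCore G ξ *ᵥ v = (G *ᵥ v) ⨯₃ (G *ᵥ ξ) := by
  ext α
  fin_cases α <;>
  · simp only [mulVec, dotProduct, curlCore, cross_apply, Fin.sum_univ_three, of_apply,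
      cons_val_zero, cons_val_one, cons_val, Fin.isValue, Fin.zero_eta, Fin.mk_one,
      Fin.reduceFinMk, Nat.succ_eq_add_one, Nat.reduceAdd]
    ring

theorem projZeroReal_mulVec (v : Fin 3 → ℝ) :
    projZeroReal G ξ *ᵥ v = ((xiNorm G ξ ^ 2)⁻¹ * (G *ᵥ ξ ⬝ᵥ v)) • ξ := by
  rw [projZeroReal, smul_mulVec, vecMulVec_mulVec, op_smul_eq_smul, smul_smul]

theorem curlCore_mul_projZeroReal : curlCore G ξ * projZeroReal G ξ = 0 := by
  refine ext_iff_mulVec.2 fun v ↦ ?_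
  rw [← mulVec_mulVec, projZeroReal_mulVec, mulVec_smul, curlCore_mulVec, cross_self, smul_zero,
    zero_mulVec]

theorem projZeroReal_mul_curlCore : projZeroReal G ξ * curlCore G ξ = 0 := by
  refine ext_iff_mulVec.2 fun v ↦ ?_
  rw [← mulVec_mulVec, projZeroReal_mulVec, curlCore_mulVec, dot_cross_self, mul_zero, zero_smul,
    zero_mulVec]

theorem isSymm_mul_projZeroReal : (G * projZeroReal G ξ).IsSymm := by
  rw [projZeroReal, Matrix.mul_smul, mul_vecMulVec]
  exact IsSymm.smul (transpose_vecMulVec _ _) _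

variable {G} in
theorem projZeroReal_mul_self (hG : G.PosDef) (hξ : ξ ≠ 0) :
    projZeroReal G ξ * projZeroReal G ξ = projZeroReal G ξ := by
  have hs := (xiNorm_pos ξ hG hξ).ne'
  refine ext_iff_mulVec.2 fun v ↦ ?_
  rw [← mulVec_mulVec, projZeroReal_mulVec, projZeroReal_mulVec, dotProduct_smul, smul_eq_mul,
    dotProduct_comm (G *ᵥ ξ) ξ, ← xiNorm_sq ξ hG.posSemidef]
  field_simp

variable {G} in
theorem curlCore_mul_self (hG : G.PosDef) (hξ : ξ ≠ 0) :
    curlCore G ξ * curlCore G ξ = (-(G.det * xiNorm G ξ ^ 2)) • (1 - projZeroReal G ξ) := by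
  have hs := (xiNorm_pos ξ hG hξ).ne'
  have hsym := hG.isHermitian.isSymm
  have hadj (x : Fin 3 → ℝ) : (adjugate G)ᵀ *ᵥ (G *ᵥ x) = G.det • x := by
    rw [adjugate_transpose, hsym.eq, mulVec_mulVec, adjugate_mul, smul_mulVec, one_mulVec]
  refine ext_iff_mulVec.2 fun v ↦ ?_
  have hdot : G *ᵥ v ⬝ᵥ ξ = G *ᵥ ξ ⬝ᵥ v := by
    rw [dotProduct_comm, dotProduct_mulVec, ← mulVec_transpose, hsym.eq]
  rw [← mulVec_mulVec, curlCore_mulVec, curlCore_mulVec, mulVec_cross_mulVec,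
    cross_cross_eq_smul_sub_smul, mulVec_sub, mulVec_smul, mulVec_smul, hadj, hadj, hdot,
    dotProduct_comm (G *ᵥ ξ) ξ, ← xiNorm_sq ξ hG.posSemidef, smul_mulVec, sub_mulVec, one_mulVec,
    projZeroReal_mulVec]
  match_scalars <;> field_simp

variable {G} in
theorem transpose_mul_curlCore (hG : G.IsSymm) : (G * curlCore G ξ)ᵀ = -(G * curlCore G ξ) := by
  have h10 : G 1 0 = G 0 1 := hG.apply 0 1
  have h20 : G 2 0 = G 0 2 := hG.apply 0 2
  have h21 : G 2 1 = G 1 2 := hG.apply 1 2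
  ext i j
  fin_cases i <;> fin_cases j <;>
  · simp only [curlCore, cross_apply, mulVec, dotProduct, Fin.sum_univ_three, h20, h21, h10,
      transpose_apply, mul_apply, of_apply, cons_val_zero, cons_val_one, cons_val,
      Matrix.neg_apply, neg_add_rev, Fin.isValue, Fin.zero_eta, Fin.mk_one, Fin.reduceFinMk,
      Nat.succ_eq_add_one, Nat.reduceAdd]
    ring

theorem curlCore_apply (α β : Fin 3) :
    curlCore G ξ α β = ∑ μ, ∑ ν, ∑ γ, epsSym α μ ν * G μ β * G ν γ * ξ γ := by
  simp only [mul_assoc, ← Finset.mul_sum]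
  exact (sum_epsSym_mul_mul (fun μ ↦ G μ β) (G *ᵥ ξ) α).symm

theorem neg_curlCore_apply (α β : Fin 3) :
    -curlCore G ξ α β = ∑ μ, ∑ ν, ∑ γ, epsSym α μ ν * G μ γ * G ν β * ξ γ := by
  have h (μ ν : Fin 3) : ∑ γ, epsSym α μ ν * G μ γ * G ν β * ξ γ
      = epsSym α μ ν * ((G *ᵥ ξ) μ * G ν β) := by
    simp only [mulVec, dotProduct, Finset.mul_sum, Finset.sum_mul]
    exact Finset.sum_congr rfl fun γ _ ↦ by ring
  simp only [h, sum_epsSym_mul_mul, curlCore, of_apply]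
  rw [← Pi.neg_apply, cross_anticomm]

theorem projZero_eq_map : projZero G ξ = (projZeroReal G ξ).map Complex.ofReal := by
  ext α β
  simp only [projZero, projZeroReal, vecMulVec, mulVec, dotProduct, smul_of, of_apply, map_apply,
    Pi.smul_apply, smul_eq_mul, Complex.ofReal_mul, Complex.ofReal_inv, Complex.ofReal_pow,
    Complex.ofReal_sum]
  ring

theorem curlPrin_eq_smul_map :
    curlPrin G ξ = (-Complex.I * ((√G.det)⁻¹ : ℝ)) • (curlCore G ξ).map Complex.ofReal := by
  ext α β
  simp only [curlPrin, curlCore_apply, of_apply, Matrix.smul_apply, map_apply, smul_eq_mul,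
    Complex.ofReal_mul]
  ring

theorem projPM_eq_spectralProj (σ : ℝ) :
    projPM σ G ξ = spectralProj ((xiNorm G ξ / σ : ℝ) : ℂ) (projZero G ξ) (curlPrin G ξ) := by
  ext α β
  simp only [projPM, spectralProj, curlPrin, ← curlCore_apply, ← neg_curlCore_apply, one_apply,
    of_apply, smul_of, Matrix.smul_apply, Matrix.add_apply, Matrix.sub_apply, Pi.smul_apply,
    smul_eq_mul, Complex.ofReal_neg, Complex.ofReal_mul, Complex.ofReal_inv, Complex.ofReal_div,
    inv_div]
  ring

theorem projPM_one :
    projPM 1 G ξ = spectralProj (xiNorm G ξ : ℂ) (projZero G ξ) (curlPrin G ξ) := by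
  simp only [projPM_eq_spectralProj, div_one]

theorem projPM_neg_one :
    projPM (-1) G ξ = spectralProj (-(xiNorm G ξ : ℂ)) (projZero G ξ) (curlPrin G ξ) := by
  simp only [projPM_eq_spectralProj, div_neg, div_one, Complex.ofReal_neg]

theorem curlPrin_mul_projZero : curlPrin G ξ * projZero G ξ = 0 := by
  rw [curlPrin_eq_smul_map, projZero_eq_map, smul_mul_assoc, ← map_ofReal_mul,
    curlCore_mul_projZeroReal, Matrix.map_zero _ Complex.ofReal_zero, smul_zero]

theorem projZero_mul_curlPrin : projZero G ξ * curlPrin G ξ = 0 := by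
  rw [curlPrin_eq_smul_map, projZero_eq_map, mul_smul_comm, ← map_ofReal_mul,
    projZeroReal_mul_curlCore, Matrix.map_zero _ Complex.ofReal_zero, smul_zero]

theorem isSelfAdjoint_map_mul_projZero : IsSelfAdjoint (G.map Complex.ofReal * projZero G ξ) := by
  rw [projZero_eq_map, ← map_ofReal_mul]
  exact (isSymm_mul_projZeroReal G ξ).isSelfAdjoint_map_ofReal

variable {G} in
theorem isIdempotentElem_projZero (hG : G.PosDef) (hξ : ξ ≠ 0) :
    IsIdempotentElem (projZero G ξ) := by
  rw [IsIdempotentElem, projZero_eq_map, ← map_ofReal_mul, projZeroReal_mul_self ξ hG hξ]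

variable {G} in
theorem curlPrin_mul_self (hG : G.PosDef) (hξ : ξ ≠ 0) :
    curlPrin G ξ * curlPrin G ξ = (xiNorm G ξ : ℂ) ^ 2 • (1 - projZero G ξ) := by
  rw [curlPrin_eq_smul_map, smul_mul_smul_comm, ← map_ofReal_mul, curlCore_mul_self ξ hG hξ,
    map_smul' _ _ _ Complex.ofReal_mul, Matrix.map_sub _ Complex.ofReal_sub,
    Matrix.map_one _ Complex.ofReal_zero Complex.ofReal_one, ← projZero_eq_map, smul_smul]
  congr 1
  have hd := hG.det_pos
  have hr : ((√G.det : ℝ) : ℂ) ^ 2 = G.det := by exact_mod_cast Real.sq_sqrt hd.le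
  have hr0 : ((√G.det : ℝ) : ℂ) ≠ 0 := by exact_mod_cast (Real.sqrt_pos.2 hd).ne'
  push_cast
  field_simp
  linear_combination (-(G.det * xiNorm G ξ ^ 2 : ℂ)) * Complex.I_sq - (xiNorm G ξ : ℂ) ^ 2 * hr

variable {G} in
theorem isSelfAdjoint_map_mul_curlPrin (hG : G.IsSymm) :
    IsSelfAdjoint (G.map Complex.ofReal * curlPrin G ξ) := by
  rw [curlPrin_eq_smul_map, mul_smul_comm, ← map_ofReal_mul]
  exact isSelfAdjoint_smul_map_ofReal (transpose_mul_curlCore ξ hG) (by simp)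

end Symbol

theorem spectral_projections_of_curlPrin_general (G : Matrix (Fin 3) (Fin 3) ℝ)
    (hpos : G.PosDef) (ξ : Fin 3 → ℝ) (hξ : ξ ≠ 0) :
    (projZero G ξ * projZero G ξ = projZero G ξ ∧
      projPM 1 G ξ * projPM 1 G ξ = projPM 1 G ξ ∧
      projPM (-1) G ξ * projPM (-1) G ξ = projPM (-1) G ξ) ∧
    (projZero G ξ * projPM 1 G ξ = 0 ∧ projPM 1 G ξ * projZero G ξ = 0 ∧
      projZero G ξ * projPM (-1) G ξ = 0 ∧ projPM (-1) G ξ * projZero G ξ = 0 ∧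
      projPM 1 G ξ * projPM (-1) G ξ = 0 ∧ projPM (-1) G ξ * projPM 1 G ξ = 0) ∧
    (projZero G ξ + projPM 1 G ξ + projPM (-1) G ξ = 1) ∧
    ((G.map Complex.ofReal)⁻¹ * (projZero G ξ)ᴴ * G.map Complex.ofReal = projZero G ξ ∧
      (G.map Complex.ofReal)⁻¹ * (projPM 1 G ξ)ᴴ * G.map Complex.ofReal = projPM 1 G ξ ∧
      (G.map Complex.ofReal)⁻¹ * (projPM (-1) G ξ)ᴴ * G.map Complex.ofReal
        = projPM (-1) G ξ) ∧
    (curlPrin G ξ * projZero G ξ = 0 ∧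
      curlPrin G ξ * projPM 1 G ξ = ((xiNorm G ξ : ℝ) : ℂ) • projPM 1 G ξ ∧
      curlPrin G ξ * projPM (-1) G ξ = (-((xiNorm G ξ : ℝ) : ℂ)) • projPM (-1) G ξ) ∧
    curlPrin G ξ = ((xiNorm G ξ : ℝ) : ℂ) • (projPM 1 G ξ - projPM (-1) G ξ) := by
  rw [projPM_one, projPM_neg_one]
  set s : ℂ := (xiNorm G ξ : ℂ)
  have hs : s ≠ 0 := Complex.ofReal_ne_zero.2 (xiNorm_pos ξ hpos hξ).ne'
  have hs' : -s ≠ 0 := neg_ne_zero.2 hs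
  have hP := isIdempotentElem_projZero ξ hpos hξ
  have hKP := curlPrin_mul_projZero G ξ
  have hPK := projZero_mul_curlPrin G ξ
  have hK : curlPrin G ξ * curlPrin G ξ = s ^ 2 • (1 - projZero G ξ) := curlPrin_mul_self ξ hpos hξ
  have hK' : curlPrin G ξ * curlPrin G ξ = (-s) ^ 2 • (1 - projZero G ξ) := by rwa [neg_sq]
  have hGc := hpos.isHermitian.isSymm.isSelfAdjoint_map_ofReal
  have hdet := isUnit_det_map_ofReal (isUnit_iff_ne_zero.2 hpos.det_pos.ne')
  have hGP := isSelfAdjoint_map_mul_projZero G ξ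
  have hGK := isSelfAdjoint_map_mul_curlPrin ξ hpos.isHermitian.isSymm
  have hsa : IsSelfAdjoint s := Complex.conj_ofReal _
  refine ⟨⟨hP, isIdempotentElem_spectralProj hP hKP hPK hK hs,
      isIdempotentElem_spectralProj hP hKP hPK hK' hs'⟩,
    ⟨mul_spectralProj_eq_zero hP hPK, spectralProj_mul_eq_zero hP hKP,
      mul_spectralProj_eq_zero hP hPK, spectralProj_mul_eq_zero hP hKP,
      spectralProj_mul_spectralProj_neg hP hKP hPK hK hs,
      by simpa only [neg_neg] using spectralProj_mul_spectralProj_neg hP hKP hPK hK' hs'⟩,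
    add_spectralProj_add_spectralProj_neg s _ _,
    ⟨inv_mul_conjTranspose_mul_of_isSelfAdjoint hGc hdet hGP,
      inv_mul_conjTranspose_mul_of_isSelfAdjoint hGc hdet (hGc.mul_spectralProj hsa hGP hGK),
      inv_mul_conjTranspose_mul_of_isSelfAdjoint hGc hdet (hGc.mul_spectralProj hsa.neg hGP hGK)⟩,
    ⟨hKP, mul_spectralProj_eq_smul hKP hK hs, mul_spectralProj_eq_smul hKP hK' hs'⟩,
    (smul_spectralProj_sub_spectralProj_neg hs _ _).symm⟩

/-- **Theorem 1.3(b) of the paper, symbol level**: `P⁰, P⁺, P⁻` are the spectral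
projections of `curl_prin(ξ)`: idempotent, mutually annihilating, summing to `I`,
self-adjoint for the inner product `⟨u,v⟩ = Σ G^{αβ} conj(u_α) v_β`, with
`curl_prin(ξ) P⁰ = 0`, `curl_prin(ξ) P^± = ±‖ξ‖ P^±`, and consequently
`curl_prin(ξ) = ‖ξ‖ (P⁺ − P⁻)`. -/
theorem spectral_projections_of_curlPrin (G : Matrix (Fin 3) (Fin 3) ℝ)
    (hsym : G.IsSymm) (hpos : G.PosDef) (ξ : Fin 3 → ℝ) (hξ : ξ ≠ 0) :
    (projZero G ξ * projZero G ξ = projZero G ξ ∧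
      projPM 1 G ξ * projPM 1 G ξ = projPM 1 G ξ ∧
      projPM (-1) G ξ * projPM (-1) G ξ = projPM (-1) G ξ) ∧
    (projZero G ξ * projPM 1 G ξ = 0 ∧ projPM 1 G ξ * projZero G ξ = 0 ∧
      projZero G ξ * projPM (-1) G ξ = 0 ∧ projPM (-1) G ξ * projZero G ξ = 0 ∧
      projPM 1 G ξ * projPM (-1) G ξ = 0 ∧ projPM (-1) G ξ * projPM 1 G ξ = 0) ∧
    (projZero G ξ + projPM 1 G ξ + projPM (-1) G ξ = 1) ∧
    ((G.map Complex.ofReal)⁻¹ * (projZero G ξ)ᴴ * G.map Complex.ofReal = projZero G ξ ∧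
      (G.map Complex.ofReal)⁻¹ * (projPM 1 G ξ)ᴴ * G.map Complex.ofReal = projPM 1 G ξ ∧
      (G.map Complex.ofReal)⁻¹ * (projPM (-1) G ξ)ᴴ * G.map Complex.ofReal
        = projPM (-1) G ξ) ∧
    (curlPrin G ξ * projZero G ξ = 0 ∧
      curlPrin G ξ * projPM 1 G ξ = ((xiNorm G ξ : ℝ) : ℂ) • projPM 1 G ξ ∧
      curlPrin G ξ * projPM (-1) G ξ = (-((xiNorm G ξ : ℝ) : ℂ)) • projPM (-1) G ξ) ∧
    curlPrin G ξ = ((xiNorm G ξ : ℝ) : ℂ) • (projPM 1 G ξ - projPM (-1) G ξ) :=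
  spectral_projections_of_curlPrin_general G hpos ξ hξ
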